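/- arXiv:2206.04555 — 5 statements merged into one kernel-verified Lean document; each statement's English description precedes it below -/
import Mathlib

section
/- The alternating group A₄ on four letters (alternatingGroup (Fin 4) in Mathlib, of order 12) has no Lee weight. -/
/-- A weight on a group `G`: vanishes exactly at the identity, is symmetric
under inversion, and satisfies the triangle inequality. -/
def IsWeight {G : Type*} [Group G] (w : G → ℕ) : Prop :=
  (∀ x, w x = 0 ↔ x = 1) ∧ (∀ x, w x⁻¹ = w x) ∧ ∀ x y, w (x * y) ≤ w x + w y

/-- A weight is gapless if its set of values is an initial segment of `ℕ`. -/
def Gapless {G : Type*} (w : G → ℕ) : Prop :=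
  ∀ g : G, ∀ m : ℕ, m ≤ w g → ∃ h : G, w h = m

/-- Two weights are `𝒫`-equivalent if they induce the same partition of `G`
into level sets. -/
def PEquivW {G : Type*} (w w' : G → ℕ) : Prop :=
  ∀ g h : G, w g = w h ↔ w' g = w' h

/-- A group has a Lee weight (equivalently, a Lee metric) if it has a gapless
weight whose level sets are exactly the sets `{a, a⁻¹}`. -/
def HasLeeWeight (G : Type*) [Group G] : Prop :=
  ∃ w : G → ℕ, IsWeight w ∧ Gapless w ∧ ∀ g h : G, w g = w h ↔ (g = h ∨ g = h⁻¹)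

namespace A4NoLee

abbrev A4 := alternatingGroup (Fin 4)

/-- Every element of `A₄` has order dividing 2 or 3. -/
lemma D1 : ∀ g : A4, g*g = 1 ∨ g*g*g = 1 := by decide

/-- Key nonexistence fact for the case of an order-3 element of weight 7. -/
lemma D3 : ∀ z t : A4, z*z*z = 1 →
    (z*t = z⁻¹*t ∨ z*t = t⁻¹*z) → (t*z = z*t ∨ t*z = t⁻¹*z⁻¹) →
    z = 1 ∨ t = 1 ∨ t = z ∨ t = z⁻¹ := by decide

/-- An involution quasi-commuting with an order-3 element is trivial. -/
lemma D4 : ∀ z t : A4, z*z = 1 → t*t*t = 1 → z*t⁻¹ = t⁻¹*z → z = 1 ∨ t = 1 := by decide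

/-- Any involution is among `1, z, t, z*t` for two distinct nontrivial involutions. -/
lemma D6 : ∀ z t s : A4, z*z = 1 → t*t = 1 → s*s = 1 →
    s = 1 ∨ s = z ∨ s = t ∨ s = z*t ∨ z = 1 ∨ t = 1 ∨ z = t := by decide

/-- Involutions in `A₄` commute. -/
lemma D7 : ∀ z t : A4, z*z = 1 → t*t = 1 → z*t = t*z := by decide

/-- There are at most 8 sets of the form `{g, g⁻¹}` in `A₄`. -/
lemma Dcard : (Finset.univ.image (fun g : A4 => ({g, g⁻¹} : Finset A4))).card ≤ 8 := by decide

/-- Eight explicit class representatives. -/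
def frep : Fin 8 → A4 :=
  ![1, ⟨Equiv.swap 0 1 * Equiv.swap 2 3, by rw [Equiv.Perm.mem_alternatingGroup]; decide⟩,
    ⟨Equiv.swap 0 2 * Equiv.swap 1 3, by rw [Equiv.Perm.mem_alternatingGroup]; decide⟩,
    ⟨Equiv.swap 0 3 * Equiv.swap 1 2, by rw [Equiv.Perm.mem_alternatingGroup]; decide⟩,
    ⟨Equiv.swap 0 1 * Equiv.swap 1 2, by rw [Equiv.Perm.mem_alternatingGroup]; decide⟩,
    ⟨Equiv.swap 0 1 * Equiv.swap 1 3, by rw [Equiv.Perm.mem_alternatingGroup]; decide⟩,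
    ⟨Equiv.swap 0 2 * Equiv.swap 2 3, by rw [Equiv.Perm.mem_alternatingGroup]; decide⟩,
    ⟨Equiv.swap 1 2 * Equiv.swap 2 3, by rw [Equiv.Perm.mem_alternatingGroup]; decide⟩]

lemma Dfrep : ∀ i j : Fin 8, (frep i = frep j ∨ frep i = (frep j)⁻¹) → i = j := by decide

end A4NoLee

open A4NoLee

/-- The alternating group `A₄` has no Lee weight. -/
theorem alternatingGroup_four_no_leeWeight :
    ¬ HasLeeWeight (alternatingGroup (Fin 4)) := by
  rintro ⟨w, ⟨w0, wi, wt⟩, gap, L⟩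
  -- the 8 representatives have pairwise distinct weights, so some weight is ≥ 7
  have hinj : ∀ i j : Fin 8, w (frep i) = w (frep j) → i = j := by
    intro i j h
    exact Dfrep i j ((L _ _).1 h)
  have hbig : ∃ i : Fin 8, 7 ≤ w (frep i) := by
    by_contra hc
    push_neg at hc
    have hsub : Finset.univ.image (fun i : Fin 8 => w (frep i)) ⊆ Finset.range 7 := by
      intro n hn
      simp only [Finset.mem_image] at hn
      obtain ⟨i, _, rfl⟩ := hn
      exact Finset.mem_range.2 (hc i)
    have h8 : (Finset.univ.image (fun i : Fin 8 => w (frep i))).card = 8 := by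
      rw [Finset.card_image_of_injOn (fun i _ j _ h => hinj i j h)]
      simp
    have := Finset.card_le_card hsub
    simp [h8] at this
  obtain ⟨i0, hi0⟩ := hbig
  -- every weight is at most 7
  have hub : ∀ g : A4, w g ≤ 7 := by
    intro g
    by_contra hc
    push_neg at hc
    have H : ∀ m : Fin 9, ∃ h : A4, w h = (m : ℕ) := by
      intro m
      exact gap g m (by omega)
    choose h hh using H
    have hinj9 : ∀ a b : Fin 9,
        (fun m => ({h m, (h m)⁻¹} : Finset A4)) a = (fun m => ({h m, (h m)⁻¹} : Finset A4)) b
        → a = b := by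
      intro a b hab
      simp only at hab
      have hm : h a ∈ ({h b, (h b)⁻¹} : Finset A4) := by
        rw [← hab]; simp
      simp only [Finset.mem_insert, Finset.mem_singleton] at hm
      have hw : w (h a) = w (h b) := by
        rcases hm with h1 | h1
        · rw [h1]
        · rw [h1, wi]
      rw [hh a, hh b] at hw
      exact Fin.ext hw
    have hle : (Finset.univ : Finset (Fin 9)).card ≤
        (Finset.univ.image (fun g : A4 => ({g, g⁻¹} : Finset A4))).card := by
      apply Finset.card_le_card_of_injOn (fun m => ({h m, (h m)⁻¹} : Finset A4))
      · intro a _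
        exact Finset.mem_image_of_mem _ (Finset.mem_univ _)
      · intro a _ b _ hab
        exact hinj9 a b hab
    have := le_trans hle Dcard
    simp at this
  -- pick elements of weight 7, 1, 2
  obtain ⟨z, hz⟩ := gap (frep i0) 7 hi0
  obtain ⟨t, ht⟩ := gap (frep i0) 1 (by omega)
  obtain ⟨s, hs⟩ := gap (frep i0) 2 (by omega)
  have hz1 : z ≠ 1 := fun h => by rw [h, (w0 1).2 rfl] at hz; omega
  have ht1 : t ≠ 1 := fun h => by rw [h, (w0 1).2 rfl] at ht; omega
  have hs1 : s ≠ 1 := fun h => by rw [h, (w0 1).2 rfl] at hs; omega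
  have htz : t ≠ z := fun h => by rw [h, hz] at ht; omega
  have htzi : t ≠ z⁻¹ := fun h => by rw [h, wi, hz] at ht; omega
  have hwti : w t⁻¹ = 1 := by rw [wi, ht]
  -- class equality from equal weights
  have cls : ∀ g h : A4, w g = w h → g = h ∨ g = h⁻¹ := fun g h => (L g h).1
  rcases D1 z with hz2 | hz3
  · -- z is an involution
    have hzi : z⁻¹ = z := by
      rw [inv_eq_iff_mul_eq_one]; exact hz2
    rcases D1 t with ht2 | ht3
    · -- t is also an involution; the third involution z*t has weight 6
      have hti : t⁻¹ = t := by rw [inv_eq_iff_mul_eq_one]; exact ht2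
      -- w (z*t) = 6
      have hlow : 6 ≤ w (z*t) := by
        have h1 := wt (z*t) t⁻¹
        rw [mul_inv_cancel_right, hz, hwti] at h1
        omega
      have hup := hub (z*t)
      have hzt6 : w (z*t) = 6 := by
        rcases (by omega : w (z*t) = 6 ∨ w (z*t) = 7) with h | h
        · exact h
        · exfalso
          rcases cls (z*t) z (by rw [h, hz]) with h1 | h1
          · exact ht1 (mul_eq_left.1 h1)
          · rw [hzi] at h1
            exact ht1 (mul_eq_left.1 h1)
      -- s cannot be an involution
      have hs3 : s*s*s = 1 := by
        rcases D1 s with hs2 | hs3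
        · exfalso
          have hztne : z ≠ t := fun h => by rw [h, ht] at hz; omega
          rcases D6 z t s hz2 ht2 hs2 with h | h | h | h | h | h | h
          · exact hs1 h
          · rw [h, hz] at hs; omega
          · rw [h, ht] at hs; omega
          · rw [h, hzt6] at hs; omega
          · exact hz1 h
          · exact ht1 h
          · exact hztne h
        · exact hs3
      have hss : s*s ≠ 1 := by
        intro h2
        apply hs1
        have h3 : s*s*s = s := by rw [h2, one_mul]
        rw [hs3] at h3
        exact h3.symm
      have hwsi : w s⁻¹ = 2 := by rw [wi, hs]
      have hcc : (z*t)⁻¹ = z*t := by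
        rw [mul_inv_rev, hzi, hti, D7 t z ht2 hz2]
      -- w (z*s) = 5
      have hlow5 : 5 ≤ w (z*s) := by
        have h1 := wt (z*s) s⁻¹
        rw [mul_inv_cancel_right, hz, hwsi] at h1
        omega
      have hzs5 : w (z*s) = 5 := by
        have hup5 := hub (z*s)
        rcases (by omega : w (z*s) = 5 ∨ w (z*s) = 6 ∨ w (z*s) = 7) with h | h | h
        · exact h
        · exfalso
          rcases cls (z*s) (z*t) (by rw [h, hzt6]) with h1 | h1
          · have h2 := mul_left_cancel h1
            rw [h2, ht] at hs; omega
          · rw [hcc] at h1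
            have h2 := mul_left_cancel h1
            rw [h2, ht] at hs; omega
        · exfalso
          rcases cls (z*s) z (by rw [h, hz]) with h1 | h1
          · exact hs1 (mul_eq_left.1 h1)
          · rw [hzi] at h1
            exact hs1 (mul_eq_left.1 h1)
      -- w (z*s⁻¹) = 5 as well
      have hlow5' : 5 ≤ w (z*s⁻¹) := by
        have h1 := wt (z*s⁻¹) s
        rw [inv_mul_cancel_right, hz, hs] at h1
        omega
      have hzsi5 : w (z*s⁻¹) = 5 := by
        have hup5 := hub (z*s⁻¹)
        rcases (by omega : w (z*s⁻¹) = 5 ∨ w (z*s⁻¹) = 6 ∨ w (z*s⁻¹) = 7) with h | h | h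
        · exact h
        · exfalso
          rcases cls (z*s⁻¹) (z*t) (by rw [h, hzt6]) with h1 | h1
          · have h2 := mul_left_cancel h1
            rw [← h2, wi, hs] at ht; omega
          · rw [hcc] at h1
            have h2 := mul_left_cancel h1
            rw [← h2, wi, hs] at ht; omega
        · exfalso
          rcases cls (z*s⁻¹) z (by rw [h, hz]) with h1 | h1
          · have h2 : s⁻¹ = 1 := mul_eq_left.1 h1
            exact hs1 (by rw [← inv_inv s, h2, inv_one])
          · rw [hzi] at h1
            have h2 : s⁻¹ = 1 := mul_eq_left.1 h1
            exact hs1 (by rw [← inv_inv s, h2, inv_one])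
      -- now z*s⁻¹ ∈ {z*s, (z*s)⁻¹}
      rcases cls (z*s⁻¹) (z*s) (by rw [hzsi5, hzs5]) with h1 | h1
      · have h2 : s⁻¹ = s := mul_left_cancel h1
        exact hss (by nth_rewrite 1 [← h2]; exact inv_mul_cancel s)
      · rw [mul_inv_rev, hzi] at h1
        rcases D4 z s hz2 hs3 h1 with h | h
        · exact hz1 h
        · exact hs1 h
    · -- t has order 3
      -- w (z*t) = 6
      have hlow : 6 ≤ w (z*t) := by
        have h1 := wt (z*t) t⁻¹
        rw [mul_inv_cancel_right, hz, hwti] at h1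
        omega
      have hzt6 : w (z*t) = 6 := by
        have hup := hub (z*t)
        rcases (by omega : w (z*t) = 6 ∨ w (z*t) = 7) with h | h
        · exact h
        · exfalso
          rcases cls (z*t) z (by rw [h, hz]) with h1 | h1
          · exact ht1 (mul_eq_left.1 h1)
          · rw [hzi] at h1
            exact ht1 (mul_eq_left.1 h1)
      -- w (z*t⁻¹) = 6
      have hlow' : 6 ≤ w (z*t⁻¹) := by
        have h1 := wt (z*t⁻¹) t
        rw [inv_mul_cancel_right, hz, ht] at h1
        omega
      have hzti6 : w (z*t⁻¹) = 6 := by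
        have hup := hub (z*t⁻¹)
        rcases (by omega : w (z*t⁻¹) = 6 ∨ w (z*t⁻¹) = 7) with h | h
        · exact h
        · exfalso
          rcases cls (z*t⁻¹) z (by rw [h, hz]) with h1 | h1
          · have h2 : t⁻¹ = 1 := mul_eq_left.1 h1
            exact ht1 (by rw [← inv_inv t, h2, inv_one])
          · rw [hzi] at h1
            have h2 : t⁻¹ = 1 := mul_eq_left.1 h1
            exact ht1 (by rw [← inv_inv t, h2, inv_one])
      rcases cls (z*t⁻¹) (z*t) (by rw [hzti6, hzt6]) with h1 | h1
      · have h2 : t⁻¹ = t := mul_left_cancel h1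
        apply ht1
        have h3 : t*t = 1 := by nth_rewrite 1 [← h2]; exact inv_mul_cancel t
        have h4 : t*t*t = t := by rw [h3, one_mul]
        rw [ht3] at h4
        exact h4.symm
      · rw [mul_inv_rev, hzi] at h1
        rcases D4 z t hz2 ht3 h1 with h | h
        · exact hz1 h
        · exact ht1 h
  · -- z has order 3
    have hzz : z*z = z⁻¹ := by
      rw [eq_inv_iff_mul_eq_one]; exact hz3
    have hzizi : z⁻¹*z⁻¹ = z := by
      rw [← mul_inv_rev, hzz, inv_inv]
    have hwzi : w z⁻¹ = 7 := by rw [wi, hz]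
    -- w (z*t) = 6
    have hzt6 : w (z*t) = 6 := by
      have h1 := wt (z*t) t⁻¹
      rw [mul_inv_cancel_right, hz, hwti] at h1
      have hup := hub (z*t)
      rcases (by omega : w (z*t) = 6 ∨ w (z*t) = 7) with h | h
      · exact h
      · exfalso
        rcases cls (z*t) z (by rw [h, hz]) with h1 | h1
        · exact ht1 (mul_eq_left.1 h1)
        · apply htz
          calc t = z⁻¹*(z*t) := (inv_mul_cancel_left z t).symm
          _ = z⁻¹*z⁻¹ := by rw [h1]
          _ = z := hzizi
    -- w (z⁻¹*t) = 6
    have hzit6 : w (z⁻¹*t) = 6 := by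
      have h1 := wt (z⁻¹*t) t⁻¹
      rw [mul_inv_cancel_right, hwzi, hwti] at h1
      have hup := hub (z⁻¹*t)
      rcases (by omega : w (z⁻¹*t) = 6 ∨ w (z⁻¹*t) = 7) with h | h
      · exact h
      · exfalso
        rcases cls (z⁻¹*t) z (by rw [h, hz]) with h1 | h1
        · apply htzi
          calc t = z*(z⁻¹*t) := (mul_inv_cancel_left z t).symm
          _ = z*z := by rw [h1]
          _ = z⁻¹ := hzz
        · exact ht1 (mul_eq_left.1 h1)
    -- w (t*z) = 6
    have htz6 : w (t*z) = 6 := by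
      have h1 := wt t⁻¹ (t*z)
      rw [inv_mul_cancel_left, hz, hwti] at h1
      have hup := hub (t*z)
      rcases (by omega : w (t*z) = 6 ∨ w (t*z) = 7) with h | h
      · exact h
      · exfalso
        rcases cls (t*z) z (by rw [h, hz]) with h1 | h1
        · exact ht1 (mul_eq_right.1 h1)
        · apply htz
          calc t = (t*z)*z⁻¹ := (mul_inv_cancel_right t z).symm
          _ = z⁻¹*z⁻¹ := by rw [h1]
          _ = z := hzizi
    -- get the two disjunctions and apply D3
    have c1 : z*t = z⁻¹*t ∨ z*t = t⁻¹*z := by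
      rcases cls (z*t) (z⁻¹*t) (by rw [hzt6, hzit6]) with h | h
      · exact Or.inl h
      · rw [mul_inv_rev, inv_inv] at h
        exact Or.inr h
    have c2 : t*z = z*t ∨ t*z = t⁻¹*z⁻¹ := by
      rcases cls (t*z) (z*t) (by rw [htz6, hzt6]) with h | h
      · exact Or.inl h
      · rw [mul_inv_rev] at h
        exact Or.inr h
    rcases D3 z t hz3 c1 c2 with h | h | h | h
    · exact hz1 h
    · exact ht1 h
    · exact htz h
    · exact htzi h
end

section
/- Let G be a group that is not cyclic. Suppose that the subgroup of G generated by the set of elements of order 2 or 4 (i.e. Subgroup.closure {x ∈ G : orderOf x = 2 ∨ orderOf x = 4}) is a proper subgroup of G, and that the center of G contains no element of order 2. Then G has no Lee weight. -/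
/-! Let `w` be a Lee weight and `a` an element of weight 1. Because the level sets of `w` are the
pairs `{g, g⁻¹}`, an element `g` none of whose neighbours `a^{±1} g`, `g a^{±1}` is lighter than
`g` satisfies `g² = a^{±1}`, commutes with `a`, or has `g⁴ = a⁴ = 1`. Descending in weight, `a`
commutes with everything outside `⟨a⟩` (if `a⁴ ≠ 1`) or outside the subgroup generated by the
elements of order 2 or 4 (if `a⁴ = 1`); both are proper, so `a` is central. Moreover `a` has finite
order, since otherwise `w (a ^ n) = n` for all `n` and `G = ⟨a⟩`.

If the order of `a` is even, a power of `a` is a central involution. If it is odd, the weights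
along `g, g a, g a², …` change by exactly one at each step unless `g² ∈ ⟨a⟩`, so returning to `g`
after an odd number of steps forces `g² ∈ ⟨a⟩`. An element outside `⟨a⟩`, corrected by a power of
its square, is then an involution, and it is central because its commutators lie in the central
subgroup `⟨a⟩` and square to 1, hence are trivial. -/

open Subgroup

section Group

variable {G : Type*} [Group G]

lemma orderOf_eq_two_or_four {x : G} (hx1 : x ≠ 1) (hx4 : x ^ 4 = 1) :
    orderOf x = 2 ∨ orderOf x = 4 := by
  have hdvd : orderOf x ∣ 4 := orderOf_dvd_of_pow_eq_one hx4
  have hne : orderOf x ≠ 1 := by rwa [Ne, orderOf_eq_one_iff]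
  have hle : orderOf x ≤ 4 := Nat.le_of_dvd (by norm_num) hdvd
  interval_cases orderOf x <;> simp_all

lemma mem_center_of_forall_notMem_commute {T : Subgroup G} (hT : T ≠ ⊤) {a : G}
    (ha : ∀ g ∉ T, Commute a g) : a ∈ center G := by
  obtain ⟨y, hy⟩ : ∃ y, y ∉ T := by
    by_contra! h
    exact hT ((eq_top_iff' T).2 h)
  refine mem_center_iff.2 fun x => (?_ : Commute a x).eq.symm
  by_cases hx : x ∈ T
  · have hxy : x * y ∉ T := (T.mul_mem_cancel_left hx).not.2 hy
    simpa using (ha _ hxy).mul_right (ha y hy).inv_right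
  · exact ha x hx

lemma commute_or_pow_four_eq_one {a g : G}
    (h1 : a⁻¹ * g = a * g ∨ a⁻¹ * g = (a * g)⁻¹)
    (h2 : g * a = a * g ∨ g * a = (a * g)⁻¹)
    (h3 : g * a⁻¹ = a * g ∨ g * a⁻¹ = (a * g)⁻¹) :
    Commute a g ∨ (g ^ 4 = 1 ∧ a ^ 4 = 1) := by
  rcases h2 with h2 | h2
  · exact .inl h2.symm
  have hga : g * g = (a * a)⁻¹ := by
    calc g * g = g * (g * a) * a * (a * a)⁻¹ := by group
      _ = (a * a)⁻¹ := by rw [h2]; group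
  have hpow4 : ∀ x : G, x ^ 4 = (x * x) * (x * x) := fun x => by simp [pow_succ, mul_assoc]
  suffices ha4 : (a * a) * (a * a) = 1 by
    rw [hpow4, hpow4, hga, ← mul_inv_rev, ha4, inv_one]
    exact .inr ⟨rfl, rfl⟩
  rcases h1 with h1 | h1
  · rw [inv_eq_iff_mul_eq_one.1 (mul_right_cancel h1), one_mul]
  rcases h3 with h3 | h3
  · have hsq : g * g = a * a := by
      calc g * g = g * (g * a⁻¹) * a := by group
        _ = g * (a⁻¹ * g)⁻¹ * a := by rw [h3, h1, inv_inv]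
        _ = a * a := by group
    nth_rewrite 1 [← hsq]
    rw [hga, inv_mul_cancel]
  · have hgg : g * g = 1 :=
      (inv_eq_iff_mul_eq_one.1 (mul_right_cancel (h3.trans (mul_inv_rev a g))).symm)
    rw [← inv_inv (a * a), ← hga, hgg, inv_one, one_mul]

lemma exists_sq_eq_one_of_sq_mem_zpowers {a g : G} (hodd : Odd (orderOf a))
    (hg2 : g ^ 2 ∈ zpowers a) (hg : g ∉ zpowers a) : ∃ t : G, t ^ 2 = 1 ∧ t ≠ 1 := by
  -- squaring is invertible on `⟨a⟩`, so `g²` has a square root `(g²)ᵐ` there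
  obtain ⟨m, hm⟩ := exists_pow_eq_self_of_coprime
    (Nat.coprime_two_left.2 (hodd.of_dvd_nat (orderOf_dvd_of_mem_zpowers hg2)))
  refine ⟨g * ((g ^ 2) ^ m)⁻¹, ?_, fun h => hg ?_⟩
  · have hcomm : Commute g ((g ^ 2) ^ m)⁻¹ := ((Commute.self_pow g 2).pow_right m).inv_right
    rw [hcomm.mul_pow, inv_pow, ← pow_mul, mul_comm m 2, pow_mul, hm, mul_inv_cancel]
  · rw [mul_inv_eq_one.1 h]
    exact pow_mem hg2 m

lemma mem_center_of_sq_eq_one {A : Subgroup G} (hA : A ≤ center G)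
    (hA2 : ∀ c ∈ A, c ^ 2 = 1 → c = 1) (hsq : ∀ g : G, g ^ 2 ∈ A) {t : G} (ht : t ^ 2 = 1) :
    t ∈ center G := by
  have htt : t * t = 1 := by rwa [← sq]
  refine mem_center_iff.2 fun h => ?_
  obtain ⟨c, hc⟩ : ∃ c, c = t * h * t * h⁻¹ := ⟨_, rfl⟩
  have hcA : c ∈ A := by
    have : c = (t * h) ^ 2 * (h ^ 2)⁻¹ := by
      rw [hc, sq, sq, ← inv_eq_of_mul_eq_one_right htt]; group
    exact this ▸ mul_mem (hsq _) (inv_mem (hsq h))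
  have hct : t * c = c * t := mem_center_iff.1 (hA hcA) t
  have hth : t * h * t = c * h := by rw [hc]; group
  -- conjugating `h` twice by `t` multiplies it by the central element `c` twice
  have hc2 : c ^ 2 = 1 := by
    have : c * c * h = 1 * h := by
      calc c * c * h = c * (t * h * t) := by rw [hth, mul_assoc]
        _ = t * (c * h) * t := by rw [← mul_assoc, ← mul_assoc, ← hct]; group
        _ = (t * t) * h * (t * t) := by rw [← hth]; group
        _ = 1 * h := by rw [htt]; group
    rw [sq, mul_right_cancel this]
  rw [hA2 c hcA hc2, one_mul] at hth
  calc h * t = t * (t * h * t) := by rw [← mul_assoc, ← mul_assoc, htt, one_mul]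
    _ = t * h := by rw [hth]

end Group

lemma Nat.even_of_apply_eq_of_step {f : ℕ → ℕ}
    (hstep : ∀ j, f (j + 1) = f j + 1 ∨ f j = f (j + 1) + 1) {n : ℕ} (hn : f n = f 0) :
    Even n := by
  have hpar : ∀ j, (f j + j) % 2 = f 0 % 2 := by
    intro j
    induction j with
    | zero => simp
    | succ j ih => have := hstep j; omega
  have := hpar n
  rw [hn] at this
  rw [Nat.even_iff]
  omega

section LeeWeight

variable {G : Type*} [Group G] {w : G → ℕ}

lemma weight_inv (hlev : ∀ g h : G, w g = w h ↔ g = h ∨ g = h⁻¹) (x : G) : w x⁻¹ = w x :=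
  (hlev _ _).2 (.inr rfl)

lemma commute_of_weight_mul_left_eq (hlev : ∀ g h : G, w g = w h ↔ g = h ∨ g = h⁻¹)
    {b g : G} (hb : b ≠ 1) (h : w (b * g) = w g) : Commute b g := by
  rcases (hlev _ _).1 h with h | h
  · exact absurd (mul_eq_right.1 h) hb
  · rw [eq_mul_inv_of_mul_eq h]
    exact (Commute.refl g).inv_left.mul_left (Commute.refl g).inv_left

lemma commute_of_weight_mul_right_eq (hlev : ∀ g h : G, w g = w h ↔ g = h ∨ g = h⁻¹)
    {b g : G} (hb : b ≠ 1) (h : w (g * b) = w g) : Commute b g := by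
  rcases (hlev _ _).1 h with h | h
  · exact absurd (mul_eq_left.1 h) hb
  · rw [eq_inv_mul_of_mul_eq h]
    exact (Commute.refl g).inv_left.mul_left (Commute.refl g).inv_left

lemma exists_weight_lt_or_commute (hmul : ∀ x y : G, w (x * y) ≤ w x + w y)
    (hlev : ∀ g h : G, w g = w h ↔ g = h ∨ g = h⁻¹) {a : G} (ha1 : a ≠ 1) (ha : w a = 1)
    (g : G) :
    (∃ b, (b = a ∨ b = a⁻¹) ∧ (w (b * g) < w g ∨ w (g * b) < w g)) ∨ Commute a g ∨
      (g ^ 4 = 1 ∧ a ^ 4 = 1) := by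
  by_cases hlt : ∃ b, (b = a ∨ b = a⁻¹) ∧ (w (b * g) < w g ∨ w (g * b) < w g)
  · exact .inl hlt
  push Not at hlt
  have key : ∀ b, (b = a ∨ b = a⁻¹) →
      (w (b * g) = w g + 1 ∧ w (g * b) = w g + 1) ∨ Commute a g := by
    intro b hb
    have hb1 : b ≠ 1 := by rcases hb with rfl | rfl <;> simpa
    have hwb : w b = 1 := by rcases hb with rfl | rfl; exacts [ha, (weight_inv hlev a).trans ha]
    have hcomm : Commute b g → Commute a g := by
      rcases hb with rfl | rfl; exacts [id, Commute.inv_left_iff.1]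
    obtain ⟨hl, hr⟩ := hlt b hb
    have := hmul b g
    have := hmul g b
    by_cases el : w (b * g) = w g
    · exact .inr (hcomm (commute_of_weight_mul_left_eq hlev hb1 el))
    by_cases er : w (g * b) = w g
    · exact .inr (hcomm (commute_of_weight_mul_right_eq hlev hb1 er))
    exact .inl ⟨by omega, by omega⟩
  rcases key a (.inl rfl) with ⟨h1, h2⟩ | hc
  swap; · exact .inr (.inl hc)
  rcases key a⁻¹ (.inr rfl) with ⟨h3, h4⟩ | hc
  swap; · exact .inr (.inl hc)
  exact .inr (commute_or_pow_four_eq_one ((hlev _ _).1 (by omega)) ((hlev _ _).1 (by omega))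
    ((hlev _ _).1 (by omega)))

lemma commute_of_notMem (hmul : ∀ x y : G, w (x * y) ≤ w x + w y)
    (hlev : ∀ g h : G, w g = w h ↔ g = h ∨ g = h⁻¹) {a : G} (ha1 : a ≠ 1) (ha : w a = 1)
    {T : Subgroup G} (haT : a ∈ T) (hT : a ^ 4 = 1 → ∀ g : G, g ^ 4 = 1 → g ∈ T) :
    ∀ g ∉ T, Commute a g := by
  intro g
  induction g using (measure w).wf.induction with
  | _ g ih =>
  intro hg
  rcases exists_weight_lt_or_commute hmul hlev ha1 ha g with ⟨b, hb, hlt⟩ | hc | ⟨hg4, ha4⟩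
  · have hbT : b ∈ T := by rcases hb with rfl | rfl; exacts [haT, T.inv_mem haT]
    have hab : Commute a b := by
      rcases hb with rfl | rfl; exacts [Commute.refl _, (Commute.refl _).inv_right]
    rcases hlt with hlt | hlt
    · have := ih _ hlt ((T.mul_mem_cancel_left hbT).not.2 hg)
      simpa using hab.inv_right.mul_right this
    · have := ih _ hlt ((T.mul_mem_cancel_right hbT).not.2 hg)
      simpa using this.mul_right hab.inv_right
  · exact hc
  · exact absurd (hT ha4 g hg4) hg

lemma weight_pow_of_not_isOfFinOrder (hmul : ∀ x y : G, w (x * y) ≤ w x + w y)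
    (hlev : ∀ g h : G, w g = w h ↔ g = h ∨ g = h⁻¹) (hw1 : w 1 = 0) {a : G} (ha : w a = 1)
    (hfin : ¬IsOfFinOrder a) (n : ℕ) : w (a ^ n) = n := by
  induction n using Nat.strong_induction_on with
  | _ n ih =>
  rcases n with _ | n
  · simpa using hw1
  have hle : w (a ^ (n + 1)) ≤ n + 1 := by
    have := hmul (a ^ n) a
    rwa [← pow_succ, ih n n.lt_succ_self, ha] at this
  by_contra hne
  have hk : w (a ^ (n + 1)) < n + 1 := lt_of_le_of_ne hle hne
  have hinj := injective_zpow_iff_not_isOfFinOrder.2 hfin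
  -- `k := w (a ^ (n + 1)) ≤ n` is also the weight of `a ^ k`, so `a ^ (n + 1) = a ^ (± k)`
  rcases (hlev _ _).1 (ih _ hk) with h | h
  · have := @hinj (w (a ^ (n + 1))) (n + 1 : ℕ) (by simpa only [zpow_natCast] using h)
    omega
  · have := @hinj (w (a ^ (n + 1))) (-(n + 1 : ℕ)) (by simpa only [zpow_neg, zpow_natCast] using h)
    omega

lemma isOfFinOrder_of_weight_eq_one (hmul : ∀ x y : G, w (x * y) ≤ w x + w y)
    (hlev : ∀ g h : G, w g = w h ↔ g = h ∨ g = h⁻¹) (hw1 : w 1 = 0) {a : G} (ha : w a = 1)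
    (hnc : ¬IsCyclic G) : IsOfFinOrder a := by
  by_contra hfin
  refine hnc ⟨a, fun g => ?_⟩
  rcases (hlev _ _).1 (weight_pow_of_not_isOfFinOrder hmul hlev hw1 ha hfin (w g)) with h | h
  · exact h ▸ pow_mem (mem_zpowers a) _
  · rw [← inv_inv g, ← h]
    exact inv_mem (pow_mem (mem_zpowers a) _)

lemma weight_mul_pow_succ (hmul : ∀ x y : G, w (x * y) ≤ w x + w y)
    (hlev : ∀ g h : G, w g = w h ↔ g = h ∨ g = h⁻¹) {a g : G} (ha1 : a ≠ 1) (ha : w a = 1)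
    (hag : Commute a g) (hg : g ^ 2 ∉ zpowers a) (j : ℕ) :
    w (g * a ^ (j + 1)) = w (g * a ^ j) + 1 ∨ w (g * a ^ j) = w (g * a ^ (j + 1)) + 1 := by
  have hup : w (g * a ^ (j + 1)) ≤ w (g * a ^ j) + 1 := by
    rw [pow_succ, ← mul_assoc]
    simpa [ha] using hmul (g * a ^ j) a
  have hdown : w (g * a ^ j) ≤ w (g * a ^ (j + 1)) + 1 := by
    rw [pow_succ, ← mul_assoc]
    simpa [weight_inv hlev, ha] using hmul (g * a ^ j * a) a⁻¹
  have hne : w (g * a ^ (j + 1)) ≠ w (g * a ^ j) := by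
    intro h
    rcases (hlev _ _).1 h with h | h
    · rw [pow_succ, ← mul_assoc] at h
      exact ha1 (mul_eq_left.1 h)
    · apply hg
      have hsq : g ^ 2 = (a ^ j)⁻¹ * (a ^ (j + 1))⁻¹ := by
        calc g ^ 2 = g * (g * a ^ (j + 1)) * (a ^ (j + 1))⁻¹ := by rw [sq]; group
          _ = g * (a ^ j)⁻¹ * g⁻¹ * (a ^ (j + 1))⁻¹ := by rw [h]; group
          _ = (a ^ j)⁻¹ * (a ^ (j + 1))⁻¹ := by rw [← ((hag.pow_left j).inv_left).eq]; group
      rw [hsq]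
      exact mul_mem (inv_mem (pow_mem (mem_zpowers a) _)) (inv_mem (pow_mem (mem_zpowers a) _))
  omega

lemma sq_mem_zpowers_of_odd_orderOf (hmul : ∀ x y : G, w (x * y) ≤ w x + w y)
    (hlev : ∀ g h : G, w g = w h ↔ g = h ∨ g = h⁻¹) {a g : G} (ha1 : a ≠ 1) (ha : w a = 1)
    (hodd : Odd (orderOf a)) (hag : Commute a g) : g ^ 2 ∈ zpowers a := by
  by_contra hg
  refine Nat.not_even_iff_odd.2 hodd (Nat.even_of_apply_eq_of_step (f := fun j => w (g * a ^ j))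
    (weight_mul_pow_succ hmul hlev ha1 ha hag hg) ?_)
  simp [pow_orderOf_eq_one]

lemma exists_weight_eq_one [Nontrivial G] (hw0 : ∀ x, w x = 0 ↔ x = 1) (hgap : Gapless w) :
    ∃ a : G, w a = 1 ∧ a ≠ 1 := by
  obtain ⟨x, hx⟩ := exists_ne (1 : G)
  obtain ⟨a, ha⟩ := hgap x 1 (Nat.one_le_iff_ne_zero.2 (mt (hw0 x).1 hx))
  exact ⟨a, ha, fun h => by simp [(hw0 a).2 h] at ha⟩

lemma mem_center_of_weight_eq_one (hmul : ∀ x y : G, w (x * y) ≤ w x + w y)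
    (hlev : ∀ g h : G, w g = w h ↔ g = h ∨ g = h⁻¹) {a : G} (ha1 : a ≠ 1) (ha : w a = 1)
    (hnc : ¬IsCyclic G) (h24 : closure {x : G | orderOf x = 2 ∨ orderOf x = 4} ≠ ⊤) :
    a ∈ center G := by
  by_cases ha4 : a ^ 4 = 1
  · refine mem_center_of_forall_notMem_commute h24
      (commute_of_notMem hmul hlev ha1 ha (subset_closure (orderOf_eq_two_or_four ha1 ha4))
        fun _ g hg4 => ?_)
    by_cases hg1 : g = 1
    · exact hg1 ▸ one_mem _
    · exact subset_closure (orderOf_eq_two_or_four hg1 hg4)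
  · exact mem_center_of_forall_notMem_commute
      (fun h => hnc (isCyclic_iff_exists_zpowers_eq_top.2 ⟨a, h⟩))
      (commute_of_notMem hmul hlev ha1 ha (mem_zpowers a) fun h => absurd h ha4)

end LeeWeight

/-- If `G` is not cyclic, the subgroup generated by its elements of order 2 or 4
is proper, and the center of `G` has no element of order 2, then `G` has no Lee
weight. -/
theorem no_leeWeight_of_not_cyclic {G : Type*} [Group G]
    (hnc : ¬ IsCyclic G)
    (h24 : Subgroup.closure {x : G | orderOf x = 2 ∨ orderOf x = 4} ≠ ⊤)
    (hz : ∀ x ∈ Subgroup.center G, orderOf x ≠ 2) :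
    ¬ HasLeeWeight G := by
  rintro ⟨w, ⟨hw0, -, hmul⟩, hgap, hlev⟩
  have hz2 : ∀ x ∈ center G, x ^ 2 = 1 → x = 1 := fun x hx hx2 =>
    by_contra fun hx1 => hz x hx (orderOf_eq_prime hx2 hx1)
  have : Nontrivial G := not_subsingleton_iff_nontrivial.1 fun _ => hnc inferInstance
  obtain ⟨a, ha, ha1⟩ := exists_weight_eq_one hw0 hgap
  have hcen : a ∈ center G := mem_center_of_weight_eq_one hmul hlev ha1 ha hnc h24
  rcases Nat.even_or_odd (orderOf a) with ⟨m, hm⟩ | hodd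
  · have hpos := (isOfFinOrder_of_weight_eq_one hmul hlev ((hw0 1).2 rfl) ha hnc).orderOf_pos
    refine pow_ne_one_of_lt_orderOf (n := m) (by omega) (by omega) (hz2 _ (pow_mem hcen m) ?_)
    rw [← pow_mul, mul_two, ← hm, pow_orderOf_eq_one]
  · obtain ⟨g, hg⟩ : ∃ g, g ∉ zpowers a := by
      by_contra! h
      exact hnc ⟨a, h⟩
    have hsq : ∀ g : G, g ^ 2 ∈ zpowers a := fun g =>
      sq_mem_zpowers_of_odd_orderOf hmul hlev ha1 ha hodd (mem_center_iff.1 hcen g).symm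
    obtain ⟨t, ht2, ht1⟩ := exists_sq_eq_one_of_sq_mem_zpowers hodd (hsq g) hg
    have hA : zpowers a ≤ center G := zpowers_le.2 hcen
    exact ht1 (hz2 t (mem_center_of_sq_eq_one hA (fun c hc => hz2 c (hA hc)) hsq ht2) ht2)
end

section
/- Let G be a torsion-free group (every non-identity element of G has infinite order). Then G has a Lee weight if and only if G is cyclic. -/
/-- Old Mathlib definition (removed upstream): no nontrivial element has finite order. -/
def Monoid.IsTorsionFree (G : Type*) [Monoid G] : Prop :=
  ∀ g : G, g ≠ 1 → ¬IsOfFinOrder g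

lemma tf_pow_ne {G : Type*} [Group G] (htf : Monoid.IsTorsionFree G)
    {g : G} (hg : g ≠ 1) {k : ℕ} (hk : 0 < k) : g ^ k ≠ 1 := by
  intro h
  exact htf g hg (isOfFinOrder_iff_pow_eq_one.mpr ⟨k, hk, h⟩)

/-- A torsion-free group has a Lee weight iff it is cyclic. -/
theorem torsionFree_hasLeeWeight_iff_isCyclic {G : Type*} [Group G]
    (htf : Monoid.IsTorsionFree G) : HasLeeWeight G ↔ IsCyclic G := by
  constructor
  · rintro ⟨w, ⟨h0, hinv, htri⟩, hgap, hLee⟩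
    rcases subsingleton_or_nontrivial G with hS | hN
    · exact isCyclic_of_subsingleton
    · obtain ⟨x, hx⟩ := exists_ne (1 : G)
      have hx1 : 1 ≤ w x := Nat.one_le_iff_ne_zero.mpr (fun h => hx ((h0 x).mp h))
      obtain ⟨g, hg1⟩ := hgap x 1 hx1
      have hgne : g ≠ 1 := fun h => by simp [h, (h0 (1:G)).mpr rfl] at hg1
      -- key : w (g ^ n) = n
      have key : ∀ n : ℕ, w (g ^ n) = n := by
        intro n
        induction n using Nat.twoStepInduction with
        | zero => simpa using (h0 (1:G)).mpr rfl
        | one => simpa using hg1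
        | more n ih1 ih2 =>
          have hub : w (g ^ (n + 2)) ≤ n + 2 := by
            have := htri (g ^ (n + 1)) g
            rw [← pow_succ, ih2, hg1] at this
            exact this
          have hlb : n + 1 ≤ w (g ^ (n + 2)) + 1 := by
            have := htri (g ^ (n + 2)) g⁻¹
            rw [hinv, hg1] at this
            have he : g ^ (n + 2) * g⁻¹ = g ^ (n + 1) := by
              rw [pow_succ (n := n + 1), mul_inv_cancel_right]
            rw [he, ih2] at this
            exact this
          have hcases : w (g ^ (n + 2)) = n ∨ w (g ^ (n + 2)) = n + 1 ∨
              w (g ^ (n + 2)) = n + 2 := by omega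
          rcases hcases with h | h | h
          · -- w (g^(n+2)) = n : contradiction
            exfalso
            have := (hLee (g ^ (n + 2)) (g ^ n)).mp (by rw [h, ih1])
            rcases this with heq | heq
            · have : g ^ 2 = 1 := by
                have h2 : g ^ n * g ^ 2 = g ^ n * 1 := by
                  rw [mul_one, ← pow_add]; exact heq
                exact mul_left_cancel h2
              exact tf_pow_ne htf hgne (by norm_num) this
            · have : g ^ (2 * n + 2) = 1 := by
                have h2 : g ^ (n + 2) * g ^ n = 1 := by
                  rw [heq, inv_mul_cancel]
                rw [← pow_add] at h2
                convert h2 using 2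
                ring
              exact tf_pow_ne htf hgne (by positivity) this
          · exfalso
            have := (hLee (g ^ (n + 2)) (g ^ (n + 1))).mp (by rw [h, ih2])
            rcases this with heq | heq
            · have hg1' : g = 1 := by
                have : g ^ (n + 1) * g = g ^ (n + 1) * 1 := by
                  rw [mul_one, ← pow_succ]; exact heq
                exact mul_left_cancel this
              exact hgne hg1'
            · have : g ^ (2 * n + 3) = 1 := by
                have h2 : g ^ (n + 2) * g ^ (n + 1) = 1 := by
                  rw [heq, inv_mul_cancel]
                rw [← pow_add] at h2
                convert h2 using 2
                ring
              exact tf_pow_ne htf hgne (by positivity) this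
          · exact h
      refine ⟨g, fun x => ?_⟩
      have := (hLee (g ^ (w x)) x).mp (by rw [key])
      rcases this with heq | heq
      · exact ⟨(w x : ℤ), by show g ^ ((w x : ℤ)) = x; rw [zpow_natCast, heq]⟩
      · exact ⟨-(w x : ℤ), by show g ^ (-(w x : ℤ)) = x
                              rw [zpow_neg, zpow_natCast, heq, inv_inv]⟩
  · intro hC
    rcases subsingleton_or_nontrivial G with hS | hN
    · refine ⟨fun _ => 0, ⟨fun x => by simp [Subsingleton.elim x 1], fun x => rfl,
        fun x y => by simp⟩, fun g m hm => ⟨1, by simp at hm ⊢; omega⟩,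
        fun g h => by simp [Subsingleton.elim g h]⟩
    · obtain ⟨g, hg⟩ := hC.exists_generator
      have hgne : g ≠ 1 := by
        intro h
        obtain ⟨x, hx⟩ := exists_ne (1 : G)
        obtain ⟨n, hn⟩ := hg x
        simp only [h, one_zpow] at hn
        exact hx hn.symm
      have hinj : Function.Injective (zpowersHom G g) := by
        rw [injective_iff_map_eq_one]
        intro a ha
        rw [zpowersHom_apply] at ha
        by_contra hne
        have hta : a.toAdd ≠ 0 := fun h => hne (by
          have : a = Multiplicative.ofAdd 0 := by
            apply Multiplicative.toAdd.injective; simpa using h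
          simpa using this)
        have hpow : g ^ a.toAdd.natAbs = 1 := by
          rcases Int.natAbs_eq a.toAdd with h | h
          · rw [← zpow_natCast, ← h, ha]
          · rw [← zpow_natCast, ← neg_neg (a.toAdd.natAbs : ℤ), ← h, zpow_neg, ha, inv_one]
        exact tf_pow_ne htf hgne (Int.natAbs_pos.mpr hta) hpow
      have hsurj : Function.Surjective (zpowersHom G g) := by
        intro x
        obtain ⟨n, hn⟩ := hg x
        exact ⟨Multiplicative.ofAdd n, by simpa using hn⟩
      let e : Multiplicative ℤ ≃* G := MulEquiv.ofBijective _ ⟨hinj, hsurj⟩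
      refine ⟨fun x => (e.symm x).toAdd.natAbs, ⟨?_, ?_, ?_⟩, ?_, ?_⟩
      · intro x
        rw [Int.natAbs_eq_zero]
        constructor
        · intro h
          have : e.symm x = 1 := by
            apply Multiplicative.toAdd.injective; simpa using h
          simpa using congrArg e this
        · rintro rfl; simp
      · intro x
        show (e.symm x⁻¹).toAdd.natAbs = _
        rw [map_inv]
        simp
      · intro x y
        show (e.symm (x * y)).toAdd.natAbs ≤ _
        rw [map_mul]
        simpa using Int.natAbs_add_le _ _
      · intro x m hm
        exact ⟨e (Multiplicative.ofAdd (m : ℤ)), by simp⟩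
      · intro x y
        rw [Int.natAbs_eq_natAbs_iff]
        constructor
        · rintro (h | h)
          · left
            have : e.symm x = e.symm y := Multiplicative.toAdd.injective h
            exact e.symm.injective this
          · right
            have : e.symm x = (e.symm y)⁻¹ := by
              apply Multiplicative.toAdd.injective; simpa using h
            rw [← map_inv] at this
            exact e.symm.injective this
        · rintro (rfl | rfl)
          · left; rfl
          · right; simp
end

section
/- Let F be a finite field with q elements, where q ∉ {2, 3, 5}. Then the affine group Aff(F) = F ⋊ Fˣ (the group of maps x ↦ a·x + b with a ∈ Fˣ, b ∈ F) has no Lee weight. -/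
/-- The action of `Fˣ` on the additive group of `F` by multiplication, as a
homomorphism to the automorphisms of `Multiplicative F`. This makes
`Multiplicative F ⋊[affHom F] Fˣ` the affine group `Aff(F) = F ⋊ Fˣ`, with
multiplication `(b, a) * (b', a') = (b + a·b', a·a')`. -/
def affHom (F : Type*) [Field F] : Fˣ →* MulAut (Multiplicative F) where
  toFun a := AddEquiv.toMultiplicative (DistribMulAction.toAddAut Fˣ F a)
  map_one' := by ext x; simp
  map_mul' a b := by ext x; simp [mul_smul]

section Helpers

lemma key_lemma {G : Type*} [Group G] (w : G → ℕ) (hw : IsWeight w)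
    (hlev : ∀ g h : G, w g = w h ↔ (g = h ∨ g = h⁻¹))
    (t : G) (ht : w t = 1) (g : G) :
    g * t = g⁻¹ ∨ t * g = g⁻¹ ∨ t * g * t = (g * t)⁻¹ ∨ t * g * t = (t * g)⁻¹ ∨
    (t * g * t = g ∨ t * g * t = g⁻¹) ∨ (t * g = g * t ∨ t * g = (g * t)⁻¹) := by
  obtain ⟨hw0, hwinv, hwtri⟩ := hw
  have htne : t ≠ 1 := by
    intro h; rw [h, (hw0 1).2 rfl] at ht; exact one_ne_zero ht.symm
  have htinv : w t⁻¹ = 1 := by rw [hwinv]; exact ht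
  set v1 := w g with hv1
  set v2 := w (g * t) with hv2
  set v3 := w (t * g * t) with hv3
  set v4 := w (t * g) with hv4
  have h12 : v2 ≤ v1 + 1 := by rw [← ht]; exact hwtri g t
  have h21 : v1 ≤ v2 + 1 := by
    have := hwtri (g * t) t⁻¹
    rw [mul_inv_cancel_right, htinv] at this; exact this
  have h23 : v3 ≤ v2 + 1 := by
    have := hwtri t (g * t)
    rw [ht, ← mul_assoc] at this; omega
  have h32 : v2 ≤ v3 + 1 := by
    have := hwtri t⁻¹ (t * g * t)
    rw [htinv] at this
    rw [show t⁻¹ * (t * g * t) = g * t by group] at this; omega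
  have h34 : v3 ≤ v4 + 1 := by rw [← ht]; exact hwtri (t * g) t
  have h43 : v4 ≤ v3 + 1 := by
    have := hwtri (t * g * t) t⁻¹
    rw [mul_inv_cancel_right, htinv] at this; omega
  have h14 : v4 ≤ v1 + 1 := by
    have := hwtri t g; rw [ht] at this; omega
  have h41 : v1 ≤ v4 + 1 := by
    have := hwtri t⁻¹ (t * g)
    rw [htinv, inv_mul_cancel_left] at this; omega
  have hcases : v1 = v2 ∨ v2 = v3 ∨ v3 = v4 ∨ v4 = v1 ∨ v1 = v3 ∨ v2 = v4 := by omega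
  rcases hcases with h | h | h | h | h | h
  · rcases (hlev g (g * t)).1 h with h' | h'
    · exact absurd (left_eq_mul.1 h') htne
    · exact Or.inl (inv_eq_iff_eq_inv.1 h'.symm)
  · rcases (hlev (g * t) (t * g * t)).1 h with h' | h'
    · exfalso; apply htne
      rw [show t * g * t = t * (g * t) by group] at h'
      exact (right_eq_mul.1 h')
    · exact Or.inr (Or.inr (Or.inl (inv_eq_iff_eq_inv.1 h'.symm)))
  · rcases (hlev (t * g * t) (t * g)).1 h with h' | h'
    · exact absurd (mul_eq_left.1 h') htne
    · exact Or.inr (Or.inr (Or.inr (Or.inl h')))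
  · rcases (hlev (t * g) g).1 h with h' | h'
    · exact absurd (mul_eq_right.1 h') htne
    · exact Or.inr (Or.inl h')
  · rcases (hlev g (t * g * t)).1 h with h' | h'
    · exact Or.inr (Or.inr (Or.inr (Or.inr (Or.inl (Or.inl h'.symm)))))
    · exact Or.inr (Or.inr (Or.inr (Or.inr (Or.inl (Or.inr (inv_eq_iff_eq_inv.1 h'.symm))))))
  · rcases (hlev (g * t) (t * g)).1 h with h' | h'
    · exact Or.inr (Or.inr (Or.inr (Or.inr (Or.inr (Or.inl h'.symm)))))
    · exact Or.inr (Or.inr (Or.inr (Or.inr (Or.inr (Or.inr (inv_eq_iff_eq_inv.1 h'.symm))))))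

variable {F : Type*} [Field F]

/-- Coordinates for the affine group. -/
def amk (x : F) (e : Fˣ) : Multiplicative F ⋊[affHom F] Fˣ :=
  ⟨Multiplicative.ofAdd x, e⟩

lemma amk_mul (x y : F) (e f : Fˣ) : amk x e * amk y f = amk (x + e * y) (e * f) := rfl

lemma amk_one : (1 : Multiplicative F ⋊[affHom F] Fˣ) = amk 0 1 := rfl

lemma amk_inj {x y : F} {e f : Fˣ} (h : amk x e = amk y f) : x = y ∧ e = f := by
  cases h; exact ⟨rfl, rfl⟩

lemma amk_inv (x : F) (e : Fˣ) : (amk x e)⁻¹ = amk (-((e⁻¹ : Fˣ) * x)) e⁻¹ := by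
  have he : (e : F) ≠ 0 := e.ne_zero
  have : amk x e * amk (-((e⁻¹ : Fˣ) * x)) e⁻¹ = 1 := by
    rw [amk_mul, amk_one]
    congr 1
    · push_cast
      field_simp
      ring
    · simp
  exact inv_eq_of_mul_eq_one_right this

lemma amk_surj (g : Multiplicative F ⋊[affHom F] Fˣ) :
    g = amk (Multiplicative.toAdd g.left) g.right := by
  cases g; rfl

lemma exists_rep {γ : Type*} (d : γ) (P : γ → Prop) (h : ∀ a b, P a → P b → a = b) :
    ∃ s, ∀ x, P x → x = s := by
  by_cases hx : ∃ x, P x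
  · obtain ⟨x₀, hx₀⟩ := hx; exact ⟨x₀, fun y hy => h y x₀ hy hx₀⟩
  · exact ⟨d, fun y hy => absurd ⟨y, hy⟩ hx⟩

lemma exists_notin {γ : Type*} [Fintype γ] (s : Finset γ) (h : s.card < Fintype.card γ) :
    ∃ x : γ, x ∉ s := by
  by_contra hc
  push_neg at hc
  have hsub : (Finset.univ : Finset γ) ⊆ s := fun x _ => hc x
  have := Finset.card_le_card hsub
  rw [Finset.card_univ] at this
  omega

lemma card_le_succ {γ : Type*} [DecidableEq γ] (a : γ) (s : Finset γ) {n : ℕ} (h : s.card ≤ n) :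
    (insert a s).card ≤ n + 1 := le_trans (Finset.card_insert_le _ _) (by omega)

end Helpers

/-- For a finite field `F` with `q ∉ {2, 3, 5}` elements, the affine group
`Aff(F) = F ⋊ Fˣ` has no Lee weight. -/
theorem affine_group_no_leeWeight (F : Type*) [Field F] [Finite F]
    (h2 : Nat.card F ≠ 2) (h3 : Nat.card F ≠ 3) (h5 : Nat.card F ≠ 5) :
    ¬ HasLeeWeight (Multiplicative F ⋊[affHom F] Fˣ) := by
  classical
  have : Fintype F := Fintype.ofFinite F
  rintro ⟨w, hw, hgap, hlev⟩
  obtain ⟨hw0, hwinv, hwtri⟩ := id hw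
  have hcard : Nat.card F = Fintype.card F := Nat.card_eq_fintype_card
  have hq2 : 2 ≤ Fintype.card F := Fintype.one_lt_card
  have hq4 : 4 ≤ Fintype.card F := by
    rw [hcard] at h2 h3
    omega
  have hcardu : Fintype.card Fˣ = Fintype.card F - 1 := Fintype.card_units F
  -- obtain an element of weight 1
  have hamkne : (amk (1 : F) 1 : Multiplicative F ⋊[affHom F] Fˣ) ≠ 1 := by
    rw [amk_one]
    intro h
    exact one_ne_zero (amk_inj h).1
  have hwge : 1 ≤ w (amk (1 : F) 1) := by
    rcases Nat.eq_zero_or_pos (w (amk (1 : F) 1)) with h | h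
    · exact absurd ((hw0 _).1 h) hamkne
    · omega
  obtain ⟨t, ht⟩ := hgap _ 1 hwge
  have key := key_lemma w hw hlev t ht
  obtain ⟨β, α, htcoord⟩ : ∃ (x : F) (e : Fˣ), t = amk x e :=
    ⟨_, _, amk_surj t⟩
  subst htcoord
  have htne1 : amk β α ≠ 1 := by
    intro h; rw [h, (hw0 1).2 rfl] at ht; exact one_ne_zero ht.symm
  by_cases hα1 : α = 1
  · -- Case 1 : t is a translation
    subst hα1
    have hβ : β ≠ 0 := by
      intro h; apply htne1; rw [h]; rw [amk_one]
    obtain ⟨e, he⟩ : ∃ e : Fˣ, e ∉ ({1, -1} : Finset Fˣ) := by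
      apply exists_notin
      have h2' : ({1, -1} : Finset Fˣ).card ≤ 2 := by
        apply le_trans (Finset.card_insert_le _ _)
        simp
      omega
    simp only [Finset.mem_insert, Finset.mem_singleton, not_or] at he
    obtain ⟨he1, hen1⟩ := he
    have he0 : (e : F) ≠ 0 := e.ne_zero
    have he1F : (e : F) ≠ 1 := fun h => he1 (Units.ext (by simpa using h))
    have hen1F : (e : F) ≠ -1 := fun h => hen1 (Units.ext (by simpa using h))
    have hesq : (e : F) * e ≠ 1 := by
      intro h
      rcases mul_self_eq_one_iff.1 h with h' | h'
      · exact he1F h'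
      · exact hen1F h'
    rcases key (amk 0 e) with h | h | h | h | (h | h) | (h | h)
    · simp only [amk_mul, amk_inv] at h
      obtain ⟨-, he'⟩ := amk_inj h
      have hv := congrArg Units.val he'
      push_cast at hv
      apply hesq
      field_simp at hv
      linear_combination hv
    · simp only [amk_mul, amk_inv] at h
      obtain ⟨-, he'⟩ := amk_inj h
      have hv := congrArg Units.val he'
      push_cast at hv
      apply hesq
      field_simp at hv
      linear_combination hv
    · simp only [amk_mul, amk_inv] at h
      obtain ⟨-, he'⟩ := amk_inj h
      have hv := congrArg Units.val he'
      push_cast at hv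
      apply hesq
      field_simp at hv
      linear_combination hv
    · simp only [amk_mul, amk_inv] at h
      obtain ⟨-, he'⟩ := amk_inj h
      have hv := congrArg Units.val he'
      push_cast at hv
      apply hesq
      field_simp at hv
      linear_combination hv
    · -- D5 : t*g*t = g
      simp only [amk_mul, amk_inv] at h
      obtain ⟨hx, -⟩ := amk_inj h
      push_cast at hx
      apply hen1F
      have hβe : β * (1 + (e:F)) = 0 := by linear_combination hx
      rcases mul_eq_zero.1 hβe with h' | h'
      · exact absurd h' hβ
      · linear_combination h'
    · simp only [amk_mul, amk_inv] at h
      obtain ⟨-, he'⟩ := amk_inj h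
      have hv := congrArg Units.val he'
      push_cast at hv
      apply hesq
      field_simp at hv
      linear_combination hv
    · -- D7 : t*g = g*t
      simp only [amk_mul, amk_inv] at h
      obtain ⟨hx, -⟩ := amk_inj h
      push_cast at hx
      apply he1F
      have hβe : β * (1 - (e:F)) = 0 := by linear_combination hx
      rcases mul_eq_zero.1 hβe with h' | h'
      · exact absurd h' hβ
      · linear_combination -h'
    · simp only [amk_mul, amk_inv] at h
      obtain ⟨-, he'⟩ := amk_inj h
      have hv := congrArg Units.val he'
      push_cast at hv
      apply hesq
      field_simp at hv
      linear_combination hv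
  · -- α ≠ 1
    have hα1F : (α : F) ≠ 1 := fun h => hα1 (Units.ext (by simpa using h))
    have hα0 : (α : F) ≠ 0 := α.ne_zero
    by_cases hαn : (α : F) = -1
    · -- Case 2 : α = -1
      have hn11 : (-1 : F) ≠ 1 := fun h => hα1F (hαn.trans h)
      have h2F : (2 : F) ≠ 0 := fun h => hn11 (by linear_combination -h)
      have hchar : ringChar F ≠ 2 := by
        intro hc
        haveI : CharP F 2 := hc ▸ ringChar.charP F
        exact hn11 (by simpa using CharTwo.neg_eq (1 : F))
      have hodd : Fintype.card F % 2 = 1 := FiniteField.odd_card_of_char_ne_two hchar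
      have hq7 : 7 ≤ Fintype.card F := by rw [hcard] at h5; omega
      obtain ⟨e, he⟩ : ∃ e : Fˣ, e ∉ ({1, -1} : Finset Fˣ) := by
        apply exists_notin
        have hc2 : ({1, -1} : Finset Fˣ).card ≤ 2 :=
          card_le_succ _ _ (Finset.card_singleton (-1 : Fˣ)).le
        omega
      simp only [Finset.mem_insert, Finset.mem_singleton, not_or] at he
      obtain ⟨he1, hen1⟩ := he
      have he0 : (e : F) ≠ 0 := e.ne_zero
      have he1F : (e : F) ≠ 1 := fun h => he1 (Units.ext (by simpa using h))
      have hen1F : (e : F) ≠ -1 := fun h => hen1 (Units.ext (by simpa using h))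
      have hesq : (e : F) * e ≠ 1 := by
        intro h
        rcases mul_self_eq_one_iff.1 h with h' | h'
        · exact he1F h'
        · exact hen1F h'
      -- unique solution representatives
      obtain ⟨s1, hs1⟩ := exists_rep (0 : F)
        (fun x : F => amk x e * (amk x e * amk β α) = 1) (by
          intro a b ha hb
          simp only [amk_mul] at ha hb
          obtain ⟨hxa, -⟩ := amk_inj (ha.trans amk_one)
          obtain ⟨hxb, -⟩ := amk_inj (hb.trans amk_one)
          push_cast at hxa hxb
          have hd : (a - b) * (1 + (e : F)) = 0 := by linear_combination hxa - hxb
          rcases mul_eq_zero.1 hd with h' | h'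
          · exact sub_eq_zero.1 h'
          · exact absurd (by linear_combination h' : (e : F) = -1) hen1F)
      obtain ⟨s2, hs2⟩ := exists_rep (0 : F)
        (fun x : F => amk x e * (amk β α * amk x e) = 1) (by
          intro a b ha hb
          simp only [amk_mul] at ha hb
          obtain ⟨hxa, -⟩ := amk_inj (ha.trans amk_one)
          obtain ⟨hxb, -⟩ := amk_inj (hb.trans amk_one)
          push_cast at hxa hxb
          have hd : (a - b) * (1 + (e : F) * α) = 0 := by linear_combination hxa - hxb
          rcases mul_eq_zero.1 hd with h' | h'
          · exact sub_eq_zero.1 h'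
          · rw [hαn] at h'
            exact absurd (by linear_combination -h' : (e : F) = 1) he1F)
      obtain ⟨s3, hs3⟩ := exists_rep (0 : F)
        (fun x : F => (amk x e * amk β α) * (amk β α * amk x e * amk β α) = 1) (by
          intro a b ha hb
          simp only [amk_mul] at ha hb
          obtain ⟨hxa, -⟩ := amk_inj (ha.trans amk_one)
          obtain ⟨hxb, -⟩ := amk_inj (hb.trans amk_one)
          push_cast at hxa hxb
          have hd : (a - b) * (1 + (e : F) * α * α) = 0 := by linear_combination hxa - hxb
          rcases mul_eq_zero.1 hd with h' | h'
          · exact sub_eq_zero.1 h'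
          · rw [hαn] at h'
            exact absurd (by linear_combination h' : (e : F) = -1) hen1F)
      obtain ⟨s4, hs4⟩ := exists_rep (0 : F)
        (fun x : F => (amk β α * amk x e) * (amk β α * amk x e * amk β α) = 1) (by
          intro a b ha hb
          simp only [amk_mul] at ha hb
          obtain ⟨hxa, -⟩ := amk_inj (ha.trans amk_one)
          obtain ⟨hxb, -⟩ := amk_inj (hb.trans amk_one)
          push_cast at hxa hxb
          have hd : (a - b) * ((α : F) + (α : F) * α * e) = 0 := by
            linear_combination hxa - hxb
          rcases mul_eq_zero.1 hd with h' | h'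
          · exact sub_eq_zero.1 h'
          · rw [hαn] at h'
            exact absurd (by linear_combination h' : (e : F) = 1) he1F)
      obtain ⟨s5, hs5⟩ := exists_rep (0 : F)
        (fun x : F => amk β α * amk x e * amk β α = amk x e) (by
          intro a b ha hb
          simp only [amk_mul] at ha hb
          obtain ⟨hxa, -⟩ := amk_inj ha
          obtain ⟨hxb, -⟩ := amk_inj hb
          push_cast at hxa hxb
          have hd : (a - b) * ((α : F) - 1) = 0 := by linear_combination hxa - hxb
          rcases mul_eq_zero.1 hd with h' | h'
          · exact sub_eq_zero.1 h'
          · rw [hαn] at h'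
            exact absurd (by linear_combination -h' : (2 : F) = 0) h2F)
      obtain ⟨s7, hs7⟩ := exists_rep (0 : F)
        (fun x : F => amk β α * amk x e = amk x e * amk β α) (by
          intro a b ha hb
          simp only [amk_mul] at ha hb
          obtain ⟨hxa, -⟩ := amk_inj ha
          obtain ⟨hxb, -⟩ := amk_inj hb
          push_cast at hxa hxb
          have hd : (a - b) * ((α : F) - 1) = 0 := by linear_combination hxa - hxb
          rcases mul_eq_zero.1 hd with h' | h'
          · exact sub_eq_zero.1 h'
          · rw [hαn] at h'
            exact absurd (by linear_combination -h' : (2 : F) = 0) h2F)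
      obtain ⟨x, hx⟩ : ∃ x : F, x ∉ ({s1, s2, s3, s4, s5, s7} : Finset F) := by
        apply exists_notin
        have hc6 : ({s1, s2, s3, s4, s5, s7} : Finset F).card ≤ 6 :=
          card_le_succ _ _ (card_le_succ _ _ (card_le_succ _ _ (card_le_succ _ _
            (card_le_succ _ _ (Finset.card_singleton s7).le))))
        omega
      simp only [Finset.mem_insert, Finset.mem_singleton, not_or] at hx
      obtain ⟨hx1, hx2, hx3, hx4, hx5, hx7⟩ := hx
      rcases key (amk x e) with h | h | h | h | (h | h) | (h | h)
      · exact hx1 (hs1 x (by rw [h]; group))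
      · exact hx2 (hs2 x (by rw [h]; group))
      · exact hx3 (hs3 x (by rw [h]; group))
      · exact hx4 (hs4 x (by rw [h]; group))
      · exact hx5 (hs5 x h)
      · -- D6 dead
        have h' : amk x e * (amk β α * amk x e * amk β α) = 1 := by rw [h]; group
        simp only [amk_mul] at h'
        have hv := congrArg Units.val (amk_inj (h'.trans amk_one)).2
        push_cast at hv
        rw [hαn] at hv
        exact hesq (by linear_combination hv)
      · exact hx7 (hs7 x h)
      · -- D8 dead
        have h' : (amk x e * amk β α) * (amk β α * amk x e) = 1 := by rw [h]; group
        simp only [amk_mul] at h'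
        have hv := congrArg Units.val (amk_inj (h'.trans amk_one)).2
        push_cast at hv
        rw [hαn] at hv
        exact hesq (by linear_combination hv)
    · -- Case 3 : α ≠ ±1
      have hα2 : (α : F) * α ≠ 1 := by
        intro h
        rcases mul_self_eq_one_iff.1 h with h' | h'
        · exact hα1F h'
        · exact hαn h'
      obtain ⟨e, he⟩ : ∃ e : Fˣ, e ∉ ({α⁻¹, -α⁻¹} : Finset Fˣ) := by
        apply exists_notin
        have hc2 : ({α⁻¹, -α⁻¹} : Finset Fˣ).card ≤ 2 :=
          card_le_succ _ _ (Finset.card_singleton _).le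
        omega
      simp only [Finset.mem_insert, Finset.mem_singleton, not_or] at he
      obtain ⟨hea, heb⟩ := he
      have he0 : (e : F) ≠ 0 := e.ne_zero
      have heα1 : (e : F) * α ≠ 1 := by
        intro h
        apply hea
        apply Units.ext
        push_cast
        field_simp
        linear_combination h
      have heαn1 : (e : F) * α ≠ -1 := by
        intro h
        apply heb
        apply Units.ext
        push_cast
        field_simp
        linear_combination h
      have heα2 : ((e : F) * α) * ((e : F) * α) ≠ 1 := by
        intro h
        rcases mul_self_eq_one_iff.1 h with h' | h'
        · exact heα1 h'
        · exact heαn1 h'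
      -- representative for the commuting equation (used in both subcases)
      obtain ⟨s7, hs7⟩ := exists_rep (0 : F)
        (fun x : F => amk β α * amk x e = amk x e * amk β α) (by
          intro a b ha hb
          simp only [amk_mul] at ha hb
          obtain ⟨hxa, -⟩ := amk_inj ha
          obtain ⟨hxb, -⟩ := amk_inj hb
          push_cast at hxa hxb
          have hd : (a - b) * ((α : F) - 1) = 0 := by linear_combination hxa - hxb
          rcases mul_eq_zero.1 hd with h' | h'
          · exact sub_eq_zero.1 h'
          · exact absurd (by linear_combination h' : (α : F) = 1) hα1F)
      by_cases hA : (e : F) * e * α = 1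
      · -- Subcase A : e² = α⁻¹ ; live equations: D1, D2, D7
        have hen1F : (e : F) ≠ -1 := by
          intro h
          rw [h] at hA
          exact hα1F (by linear_combination hA)
        obtain ⟨s1, hs1⟩ := exists_rep (0 : F)
          (fun x : F => amk x e * (amk x e * amk β α) = 1) (by
            intro a b ha hb
            simp only [amk_mul] at ha hb
            obtain ⟨hxa, -⟩ := amk_inj (ha.trans amk_one)
            obtain ⟨hxb, -⟩ := amk_inj (hb.trans amk_one)
            push_cast at hxa hxb
            have hd : (a - b) * (1 + (e : F)) = 0 := by linear_combination hxa - hxb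
            rcases mul_eq_zero.1 hd with h' | h'
            · exact sub_eq_zero.1 h'
            · exact absurd (by linear_combination h' : (e : F) = -1) hen1F)
        obtain ⟨s2, hs2⟩ := exists_rep (0 : F)
          (fun x : F => amk x e * (amk β α * amk x e) = 1) (by
            intro a b ha hb
            simp only [amk_mul] at ha hb
            obtain ⟨hxa, -⟩ := amk_inj (ha.trans amk_one)
            obtain ⟨hxb, -⟩ := amk_inj (hb.trans amk_one)
            push_cast at hxa hxb
            have hd : (a - b) * (1 + (e : F) * α) = 0 := by linear_combination hxa - hxb
            rcases mul_eq_zero.1 hd with h' | h'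
            · exact sub_eq_zero.1 h'
            · exact absurd (by linear_combination h' : (e : F) * α = -1) heαn1)
        obtain ⟨x, hx⟩ : ∃ x : F, x ∉ ({s1, s2, s7} : Finset F) := by
          apply exists_notin
          have hc3 : ({s1, s2, s7} : Finset F).card ≤ 3 :=
            card_le_succ _ _ (card_le_succ _ _ (Finset.card_singleton s7).le)
          omega
        simp only [Finset.mem_insert, Finset.mem_singleton, not_or] at hx
        obtain ⟨hx1, hx2, hx7⟩ := hx
        rcases key (amk x e) with h | h | h | h | (h | h) | (h | h)
        · exact hx1 (hs1 x (by rw [h]; group))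
        · exact hx2 (hs2 x (by rw [h]; group))
        · -- D3 dead : e²α³ = 1 together with e²α = 1 gives α² = 1
          have h' : (amk x e * amk β α) * (amk β α * amk x e * amk β α) = 1 := by
            rw [h]; group
          simp only [amk_mul] at h'
          have hv := congrArg Units.val (amk_inj (h'.trans amk_one)).2
          push_cast at hv
          exact hα2 (by linear_combination hv - (α : F) * (α : F) * hA)
        · -- D4 dead : same unit equation
          have h' : (amk β α * amk x e) * (amk β α * amk x e * amk β α) = 1 := by
            rw [h]; group
          simp only [amk_mul] at h'
          have hv := congrArg Units.val (amk_inj (h'.trans amk_one)).2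
          push_cast at hv
          exact hα2 (by linear_combination hv - (α : F) * (α : F) * hA)
        · -- D5 dead : α² = 1
          simp only [amk_mul] at h
          have hv := congrArg Units.val (amk_inj h).2
          push_cast at hv
          have hd : ((α : F) * α - 1) * e = 0 := by linear_combination hv
          rcases mul_eq_zero.1 hd with h' | h'
          · exact hα2 (by linear_combination h')
          · exact he0 h'
        · -- D6 dead : (eα)² = 1
          have h' : amk x e * (amk β α * amk x e * amk β α) = 1 := by rw [h]; group
          simp only [amk_mul] at h'
          have hv := congrArg Units.val (amk_inj (h'.trans amk_one)).2
          push_cast at hv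
          exact heα2 (by linear_combination hv)
        · exact hx7 (hs7 x h)
        · -- D8 dead : (eα)² = 1
          have h' : (amk x e * amk β α) * (amk β α * amk x e) = 1 := by rw [h]; group
          simp only [amk_mul] at h'
          have hv := congrArg Units.val (amk_inj (h'.trans amk_one)).2
          push_cast at hv
          exact heα2 (by linear_combination hv)
      · -- Subcase B : e² ≠ α⁻¹ ; live equations: D3, D4, D7
        obtain ⟨s3, hs3⟩ := exists_rep (0 : F)
          (fun x : F => (amk x e * amk β α) * (amk β α * amk x e * amk β α) = 1) (by
            intro a b ha hb
            simp only [amk_mul] at ha hb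
            obtain ⟨hxa, hua⟩ := amk_inj (ha.trans amk_one)
            obtain ⟨hxb, -⟩ := amk_inj (hb.trans amk_one)
            have hu := congrArg Units.val hua
            push_cast at hu hxa hxb
            have hd : (a - b) * (1 + (e : F) * α * α) = 0 := by linear_combination hxa - hxb
            rcases mul_eq_zero.1 hd with h' | h'
            · exact sub_eq_zero.1 h'
            · exact absurd
                (by linear_combination ((e : F) * α * α - 1) * h' - (α : F) * hu :
                  (α : F) = 1) hα1F)
        obtain ⟨s4, hs4⟩ := exists_rep (0 : F)
          (fun x : F => (amk β α * amk x e) * (amk β α * amk x e * amk β α) = 1) (by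
            intro a b ha hb
            simp only [amk_mul] at ha hb
            obtain ⟨hxa, -⟩ := amk_inj (ha.trans amk_one)
            obtain ⟨hxb, -⟩ := amk_inj (hb.trans amk_one)
            push_cast at hxa hxb
            have hd : (a - b) * ((α : F) + (α : F) * α * e) = 0 := by
              linear_combination hxa - hxb
            rcases mul_eq_zero.1 hd with h' | h'
            · exact sub_eq_zero.1 h'
            · have h'' : (α : F) * (1 + (α : F) * e) = 0 := by linear_combination h'
              rcases mul_eq_zero.1 h'' with h3 | h3
              · exact absurd h3 hα0
              · exact absurd (by linear_combination h3 : (e : F) * α = -1) heαn1)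
        obtain ⟨x, hx⟩ : ∃ x : F, x ∉ ({s3, s4, s7} : Finset F) := by
          apply exists_notin
          have hc3 : ({s3, s4, s7} : Finset F).card ≤ 3 :=
            card_le_succ _ _ (card_le_succ _ _ (Finset.card_singleton s7).le)
          omega
        simp only [Finset.mem_insert, Finset.mem_singleton, not_or] at hx
        obtain ⟨hx3, hx4, hx7⟩ := hx
        rcases key (amk x e) with h | h | h | h | (h | h) | (h | h)
        · -- D1 dead : e²α = 1 contradicts hB
          have h' : amk x e * (amk x e * amk β α) = 1 := by rw [h]; group
          simp only [amk_mul] at h'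
          have hv := congrArg Units.val (amk_inj (h'.trans amk_one)).2
          push_cast at hv
          exact hA (by linear_combination hv)
        · -- D2 dead
          have h' : amk x e * (amk β α * amk x e) = 1 := by rw [h]; group
          simp only [amk_mul] at h'
          have hv := congrArg Units.val (amk_inj (h'.trans amk_one)).2
          push_cast at hv
          exact hA (by linear_combination hv)
        · exact hx3 (hs3 x (by rw [h]; group))
        · exact hx4 (hs4 x (by rw [h]; group))
        · -- D5 dead : α² = 1
          simp only [amk_mul] at h
          have hv := congrArg Units.val (amk_inj h).2
          push_cast at hv
          have hd : ((α : F) * α - 1) * e = 0 := by linear_combination hv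
          rcases mul_eq_zero.1 hd with h' | h'
          · exact hα2 (by linear_combination h')
          · exact he0 h'
        · -- D6 dead : (eα)² = 1
          have h' : amk x e * (amk β α * amk x e * amk β α) = 1 := by rw [h]; group
          simp only [amk_mul] at h'
          have hv := congrArg Units.val (amk_inj (h'.trans amk_one)).2
          push_cast at hv
          exact heα2 (by linear_combination hv)
        · exact hx7 (hs7 x h)
        · -- D8 dead : (eα)² = 1
          have h' : (amk x e * amk β α) * (amk β α * amk x e) = 1 := by rw [h]; group
          simp only [amk_mul] at h'
          have hv := congrArg Units.val (amk_inj (h'.trans amk_one)).2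
          push_cast at hv
          exact heα2 (by linear_combination hv)
end

section
/- Let F be a finite field of characteristic 2 (so |F| = 2ⁿ is even) and let H be a subgroup of the unit group Fˣ. Then the semidirect product F ⋊ H (with H acting on the additive group of F by multiplication) has a Lee weight if and only if H is the trivial subgroup. -/
section Binary
variable (F : Type*) [Field F] [Finite F] [CharP F 2]

lemma hasLeeWeight_multiplicative : HasLeeWeight (Multiplicative F) := by
  letI : Algebra (ZMod 2) F := ZMod.algebra _ _
  letI : Module.Finite (ZMod 2) F := Module.Finite.of_finite
  set n := Module.finrank (ZMod 2) F with hn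
  let b : Module.Basis (Fin n) (ZMod 2) F := Module.finBasis (ZMod 2) F
  let wF : F → ℕ := fun x => ∑ i, (b.equivFun x i).val * 2 ^ (i : ℕ)
  have key : ∀ x : F, wF x =
      ((finFunctionFinEquiv ((fun i => b.equivFun x i) : Fin n → Fin 2)) : ℕ) := by
    intro x
    erw [finFunctionFinEquiv_apply]
    rfl
  have winj : Function.Injective wF := by
    intro x y hxy
    rw [key, key] at hxy
    have h2 : ((fun i => b.equivFun x i) : Fin n → Fin 2) = (fun i => b.equivFun y i) :=
      finFunctionFinEquiv.injective (Fin.val_injective hxy)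
    have h3 : b.equivFun x = b.equivFun y := funext fun i => congrFun h2 i
    exact b.equivFun.injective h3
  have wlt : ∀ x, wF x < 2 ^ n := fun x => by rw [key]; exact (finFunctionFinEquiv _).isLt
  have wsurj : ∀ m, m < 2 ^ n → ∃ x, wF x = m := by
    intro m hm
    refine ⟨b.equivFun.symm ((fun i => finFunctionFinEquiv.symm ⟨m, hm⟩ i) : Fin n → ZMod 2), ?_⟩
    rw [key]
    have : ((fun i => b.equivFun (b.equivFun.symm
        ((fun i => finFunctionFinEquiv.symm ⟨m, hm⟩ i) : Fin n → ZMod 2)) i) : Fin n → Fin 2)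
        = finFunctionFinEquiv.symm ⟨m, hm⟩ := by
      funext i
      show (b.equivFun (b.equivFun.symm _) i : Fin 2) = _
      erw [b.equivFun.apply_symm_apply]
    rw [this, Equiv.apply_symm_apply]
  have w0 : wF 0 = 0 := by
    simp only [wF, map_zero]
    simp [ZMod.val_zero]
  have wadd : ∀ x y, wF (x + y) ≤ wF x + wF y := by
    intro x y
    simp only [wF, map_add, ← Finset.sum_add_distrib]
    refine Finset.sum_le_sum fun i _ => ?_
    have : (b.equivFun x i + b.equivFun y i).val ≤ (b.equivFun x i).val + (b.equivFun y i).val :=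
      ZMod.val_add_le _ _
    calc ((b.equivFun x + b.equivFun y) i).val * 2 ^ (i:ℕ)
        = (b.equivFun x i + b.equivFun y i).val * 2 ^ (i:ℕ) := rfl
      _ ≤ ((b.equivFun x i).val + (b.equivFun y i).val) * 2 ^ (i:ℕ) :=
          Nat.mul_le_mul_right _ this
      _ = _ := by ring
  have wneg : ∀ x : F, wF (-x) = wF x := fun x => by rw [CharTwo.neg_eq]
  refine ⟨fun g => wF g.toAdd, ⟨?_, ?_, ?_⟩, ?_, ?_⟩
  · intro x
    constructor
    · intro h
      have := winj (h.trans w0.symm)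
      exact Multiplicative.toAdd.injective (by simpa using this)
    · rintro rfl; simpa using w0
  · intro x; simpa using wneg x.toAdd
  · intro x y; simpa using wadd x.toAdd y.toAdd
  · intro g m hm
    obtain ⟨x, hx⟩ := wsurj m (lt_of_le_of_lt hm (wlt _))
    exact ⟨Multiplicative.ofAdd x, hx⟩
  · intro g h
    constructor
    · intro he
      exact Or.inl (Multiplicative.toAdd.injective (winj he))
    · rintro (rfl | rfl)
      · rfl
      · simpa using wneg h.toAdd
end Binary

section Bot
variable (F : Type*) [Field F]

lemma hasLeeWeight_bot (hML : HasLeeWeight (Multiplicative F)) :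
    HasLeeWeight (Multiplicative F ⋊[(affHom F).comp (⊥ : Subgroup Fˣ).subtype] (⊥ : Subgroup Fˣ)) := by
  obtain ⟨w, ⟨w1, wi, wm⟩, wg, wlee⟩ := hML
  set φ := (affHom F).comp (⊥ : Subgroup Fˣ).subtype
  set G := Multiplicative F ⋊[φ] (⊥ : Subgroup Fˣ) with hG
  have hright : ∀ g : G, g.right = 1 := fun g => Subtype.ext (Subgroup.mem_bot.mp g.right.2)
  have hmul : ∀ g k : G, (g * k).left = g.left * k.left := by
    intro g k
    rw [SemidirectProduct.mul_left, hright g]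
    simp
  have hinv : ∀ g : G, (g⁻¹).left = g.left⁻¹ := by
    intro g
    rw [SemidirectProduct.inv_left, hright g]
    simp
  have heq : ∀ g k : G, g.left = k.left → g = k := by
    intro g k h
    exact SemidirectProduct.ext h ((hright g).trans (hright k).symm)
  refine ⟨fun g => w g.left, ⟨?_, ?_, ?_⟩, ?_, ?_⟩
  · intro x
    rw [w1]
    constructor
    · intro h
      exact heq x 1 (by simpa using h)
    · rintro rfl; rfl
  · intro x; exact (congrArg w (hinv x)).trans (wi _)
  · intro x y; calc w (x*y).left = w (x.left * y.left) := congrArg w (hmul x y)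
      _ ≤ _ := wm _ _
  · intro g m hm
    obtain ⟨x, hx⟩ := wg g.left m hm
    exact ⟨⟨x, 1⟩, hx⟩
  · intro g h
    rw [wlee]
    constructor
    · rintro (h1 | h1)
      · exact Or.inl (heq _ _ h1)
      · exact Or.inr (heq _ _ (by rw [hinv]; exact h1))
    · rintro (rfl | rfl)
      · exact Or.inl rfl
      · exact Or.inr (hinv h)
end Bot

section Forward
variable (F : Type*) [Field F] [CharP F 2]

omit [CharP F 2] in
lemma phi_toAdd (H : Subgroup Fˣ) (h : ↥H) (x : Multiplicative F) :
    (((affHom F).comp H.subtype h) x).toAdd = ((h : Fˣ) : F) * x.toAdd := rfl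

lemma unit_sq_eq_one {u : Fˣ} (h : u * u = 1) : u = 1 := by
  have h1 : (u : F) * u = 1 := by
    have := congrArg Units.val h
    push_cast at this
    exact this
  have hF : ((u : F) + 1) ^ 2 = 0 := by
    rw [CharTwo.add_sq, one_pow, sq, h1, CharTwo.add_self_eq_zero]
  have h2 : (u : F) + 1 = 0 := by
    exact pow_eq_zero_iff (two_ne_zero) |>.mp hF
  have h3 : (u : F) = -1 := eq_neg_of_add_eq_zero_left h2
  rw [CharTwo.neg_eq] at h3
  exact Units.ext h3

variable [Finite F]

lemma forward (H : Subgroup Fˣ)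
    (hL : HasLeeWeight (Multiplicative F ⋊[(affHom F).comp H.subtype] H)) : H = ⊥ := by
  classical
  by_contra hne
  obtain ⟨α, hα⟩ := Subgroup.ne_bot_iff_exists_ne_one.mp hne
  obtain ⟨w, ⟨w1, wi, wm⟩, wg, wlee⟩ := hL
  -- char-2 facts in H
  have sqinjH : ∀ u v : ↥H, u * u = v * v → u = v := by
    intro u v huv
    have h0 : (u * v⁻¹) * (u * v⁻¹) = 1 := by
      calc (u * v⁻¹) * (u * v⁻¹) = (u * u) * (v⁻¹ * v⁻¹) := mul_mul_mul_comm u v⁻¹ u v⁻¹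
        _ = (v * v) * (v⁻¹ * v⁻¹) := by rw [huv]
        _ = (v * v⁻¹) * (v * v⁻¹) := (mul_mul_mul_comm v v⁻¹ v v⁻¹).symm
        _ = 1 := by simp
    have h2 : ((u : Fˣ) * (v : Fˣ)⁻¹) * ((u : Fˣ) * (v : Fˣ)⁻¹) = 1 := by
      have := congrArg (fun x : ↥H => (x : Fˣ)) h0
      push_cast at this
      exact this
    have h3 := unit_sq_eq_one F h2
    have h4 : (u : Fˣ) = (v : Fˣ) := by
      have := mul_inv_eq_one.mp h3
      exact this
    exact Subtype.ext h4
  have hsqne : ∀ δ : ↥H, δ ≠ 1 → δ * δ ≠ 1 := fun δ hδ hcon =>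
    hδ (sqinjH δ 1 (by simpa using hcon))
  have hαinv : α⁻¹ ≠ α := by
    intro hcon
    apply hsqne α hα
    nth_rewrite 1 [← hcon]
    exact inv_mul_cancel α
  -- finiteness
  let E : (Multiplicative F ⋊[(affHom F).comp H.subtype] H) ≃ Multiplicative F × ↥H :=
    ⟨fun g => (g.left, g.right), fun p => ⟨p.1, p.2⟩, fun g => rfl, fun p => rfl⟩
  haveI : Finite (Multiplicative F ⋊[(affHom F).comp H.subtype] H) := Finite.of_equiv _ E.symm
  haveI : Fintype (Multiplicative F ⋊[(affHom F).comp H.subtype] H) := Fintype.ofFinite _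
  haveI : Fintype F := Fintype.ofFinite F
  -- weight-one element
  have hg₁ : (⟨1, α⟩ : Multiplicative F ⋊[(affHom F).comp H.subtype] H) ≠ 1 := by
    intro hcon
    exact hα (congrArg SemidirectProduct.right hcon)
  have hwg₁ : 1 ≤ w ⟨1, α⟩ := by
    rcases Nat.eq_zero_or_pos (w ⟨1, α⟩) with h | h
    · exact absurd ((w1 _).mp h) hg₁
    · exact h
  obtain ⟨a, hwa⟩ := wg _ 1 hwg₁
  have ha1 : a ≠ 1 := fun hcon => by
    rw [hcon, (w1 1).mpr rfl] at hwa; exact one_ne_zero hwa.symm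
  by_cases har : a.right = 1
  · -- CASE A : a lies in the normal part
    set S := Finset.univ.filter
      (fun g : Multiplicative F ⋊[(affHom F).comp H.subtype] H => g.right = α) with hS
    have hg₁S : (⟨1, α⟩ : Multiplicative F ⋊[(affHom F).comp H.subtype] H) ∈ S :=
      Finset.mem_filter.mpr ⟨Finset.mem_univ _, rfl⟩
    obtain ⟨x, hxS, hxmin⟩ := Finset.exists_min_image S w ⟨_, hg₁S⟩
    have hxr : x.right = α := (Finset.mem_filter.mp hxS).2
    have haxr : (a * x).right = α := by
      rw [SemidirectProduct.mul_right, har, one_mul, hxr]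
    have hxar : (x * a).right = α := by
      rw [SemidirectProduct.mul_right, har, mul_one, hxr]
    have hwax : w (a * x) = w x + 1 := by
      have h1 := wm a x
      rw [hwa] at h1
      have h2 : w x ≤ w (a * x) :=
        hxmin _ (Finset.mem_filter.mpr ⟨Finset.mem_univ _, haxr⟩)
      have h3 : w (a * x) ≠ w x := by
        intro hcon
        rcases (wlee _ _).mp hcon with hc | hc
        · exact ha1 (mul_right_cancel (b := x) (by rw [one_mul]; exact hc))
        · have := congrArg SemidirectProduct.right hc
          rw [haxr, SemidirectProduct.inv_right, hxr] at this
          exact hαinv this.symm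
      omega
    have hwxa : w (x * a) = w x + 1 := by
      have h1 := wm x a
      rw [hwa] at h1
      have h2 : w x ≤ w (x * a) :=
        hxmin _ (Finset.mem_filter.mpr ⟨Finset.mem_univ _, hxar⟩)
      have h3 : w (x * a) ≠ w x := by
        intro hcon
        rcases (wlee _ _).mp hcon with hc | hc
        · exact ha1 (mul_left_cancel (a := x) (by rw [mul_one]; exact hc))
        · have := congrArg SemidirectProduct.right hc
          rw [hxar, SemidirectProduct.inv_right, hxr] at this
          exact hαinv this.symm
      omega
    have hcomm : a * x = x * a := by
      have heq : w (a * x) = w (x * a) := by rw [hwax, hwxa]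
      rcases (wlee _ _).mp heq with hc | hc
      · exact hc
      · exfalso
        have := congrArg SemidirectProduct.right hc
        rw [haxr, SemidirectProduct.inv_right, hxar] at this
        exact hαinv this.symm
    have hleft := congrArg SemidirectProduct.left hcomm
    rw [SemidirectProduct.mul_left, SemidirectProduct.mul_left, har, hxr, map_one] at hleft
    simp only [MulAut.one_apply] at hleft
    have hkey : a.left = ((affHom F).comp H.subtype α) a.left := by
      rw [mul_comm] at hleft
      exact mul_left_cancel hleft
    have hta : a.left.toAdd = ((α : Fˣ) : F) * a.left.toAdd := by
      have := congrArg Multiplicative.toAdd hkey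
      rwa [phi_toAdd] at this
    by_cases ha₀ : a.left.toAdd = 0
    · apply ha1
      apply SemidirectProduct.ext
      · have : a.left = Multiplicative.ofAdd (0 : F) := by
          rw [← ha₀]; rfl
        simpa using this
      · simpa using har
    · have hc : ((α : Fˣ) : F) * a.left.toAdd = 1 * a.left.toAdd := by
        rw [one_mul]; exact hta.symm
      have : ((α : Fˣ) : F) = 1 := mul_right_cancel₀ ha₀ hc
      exact hα (Subtype.ext (Units.ext this))
  · -- CASE B : a has nontrivial H-part
    obtain ⟨γ, hγ⟩ : ∃ γ : ↥H, γ * γ = a.right :=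
      (Finite.injective_iff_surjective.mp
        (fun u v huv => sqinjH u v huv : Function.Injective (fun h : ↥H => h * h))) a.right
    have hγ1 : γ ≠ 1 := fun hcon => har (by rw [← hγ, hcon, one_mul])
    have hγF : (1 : F) + ((γ : Fˣ) : F) ≠ 0 := by
      intro hcon
      apply hγ1
      have h3 : ((γ : Fˣ) : F) = -1 := eq_neg_of_add_eq_zero_right hcon
      rw [CharTwo.neg_eq] at h3
      exact Subtype.ext (Units.ext h3)
    set γF : F := ((γ : Fˣ) : F) with hγFdef
    set a₀ : F := a.left.toAdd with ha₀def
    set k : Multiplicative F ⋊[(affHom F).comp H.subtype] H :=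
      ⟨Multiplicative.ofAdd ((1 + γF)⁻¹ * a₀), γ⟩ with hkdef
    have hk : k * k = a := by
      apply SemidirectProduct.ext
      · apply Multiplicative.toAdd.injective
        rw [SemidirectProduct.mul_left, toAdd_mul, phi_toAdd]
        show (1 + γF)⁻¹ * a₀ + γF * ((1 + γF)⁻¹ * a₀) = a₀
        field_simp
      · rw [SemidirectProduct.mul_right]
        exact hγ
    have hg₀a : k⁻¹ * a = (k⁻¹)⁻¹ := by
      rw [← hk, inv_inv]
      exact inv_mul_cancel_left k k
    have huniq : ∀ g : Multiplicative F ⋊[(affHom F).comp H.subtype] H,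
        g * a = g⁻¹ → g = k⁻¹ := by
      intro g hg
      have hm : g⁻¹ * g⁻¹ = a := by
        have h' : g⁻¹ * (g * a) = a := inv_mul_cancel_left g a
        rwa [hg] at h'
      have hrr : (g⁻¹).right = γ := by
        apply sqinjH
        have h' := congrArg SemidirectProduct.right hm
        rw [SemidirectProduct.mul_right] at h'
        rw [hγ]
        exact h'
      have hmk : g⁻¹ = k := by
        apply SemidirectProduct.ext _ (by rw [hrr])
        have hl := congrArg SemidirectProduct.left hm
        rw [SemidirectProduct.mul_left, hrr] at hl
        have hlt := congrArg Multiplicative.toAdd hl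
        rw [toAdd_mul, phi_toAdd] at hlt
        rw [← hγFdef, ← ha₀def] at hlt
        apply Multiplicative.toAdd.injective
        show (g⁻¹).left.toAdd = (1 + γF)⁻¹ * a₀
        have h2 : (1 + γF) * (g⁻¹).left.toAdd = a₀ := by linear_combination hlt
        calc (g⁻¹).left.toAdd
            = (1 + γF)⁻¹ * ((1 + γF) * (g⁻¹).left.toAdd) := (inv_mul_cancel_left₀ hγF _).symm
          _ = (1 + γF)⁻¹ * a₀ := by rw [h2]
      have := congrArg Inv.inv hmk
      rwa [inv_inv] at this
    -- the parity sum
    have wstep : ∀ g : Multiplicative F ⋊[(affHom F).comp H.subtype] H,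
        g ≠ k⁻¹ → (-1 : ℤ) ^ (w g) + (-1 : ℤ) ^ (w (g * a)) = 0 := by
      intro g hgk
      have h1 : w (g * a) ≤ w g + 1 := by have := wm g a; rw [hwa] at this; exact this
      have h2 : w g ≤ w (g * a) + 1 := by
        have := wm (g * a) a⁻¹
        rw [wi, hwa, mul_inv_cancel_right] at this
        exact this
      have h3 : w (g * a) ≠ w g := by
        intro hcon
        rcases (wlee _ _).mp hcon with hc | hc
        · exact ha1 (mul_left_cancel (a := g) (by rw [mul_one]; exact hc))
        · exact hgk (huniq g hc)
      have : w (g * a) = w g + 1 ∨ w g = w (g * a) + 1 := by omega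
      rcases this with h | h <;> rw [h, pow_succ] <;> ring
    set σ : ℤ := ∑ g : Multiplicative F ⋊[(affHom F).comp H.subtype] H, (-1 : ℤ) ^ (w g)
      with hσdef
    have hre : ∑ g : Multiplicative F ⋊[(affHom F).comp H.subtype] H,
        (-1 : ℤ) ^ (w (g * a)) = σ :=
      Fintype.sum_equiv (Equiv.mulRight a) _ _ (fun g => rfl)
    have hsum : σ + σ = 2 * (-1 : ℤ) ^ (w k⁻¹) := by
      have h' : σ + σ = ∑ g : Multiplicative F ⋊[(affHom F).comp H.subtype] H,
          ((-1 : ℤ) ^ (w g) + (-1 : ℤ) ^ (w (g * a))) := by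
        rw [Finset.sum_add_distrib, hre]
      rw [h', Finset.sum_eq_single k⁻¹]
      · have hw : w (k⁻¹ * a) = w k⁻¹ := by rw [hg₀a, wi]
        rw [hw]; ring
      · intro b _ hb; exact wstep b hb
      · intro hnot; exact absurd (Finset.mem_univ _) hnot
    have hσval : σ = (-1 : ℤ) ^ (w k⁻¹) := by linarith
    -- card even
    have hF2 : 2 ∣ Fintype.card F :=
      Nat.dvd_of_mod_eq_zero (FiniteField.even_card_of_char_two (ringChar.eq F 2))
    have hcard : 2 ∣ Fintype.card (Multiplicative F ⋊[(affHom F).comp H.subtype] H) := by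
      have hc1 := Fintype.card_congr E
      rw [Fintype.card_prod, Fintype.card_multiplicative] at hc1
      rw [hc1]
      exact Dvd.dvd.mul_right hF2 _
    have hA : ((σ : ZMod 2)) = 0 := by
      rw [hσdef, Int.cast_sum]
      have h1 : ∀ g : Multiplicative F ⋊[(affHom F).comp H.subtype] H,
          (((-1 : ℤ) ^ (w g) : ℤ) : ZMod 2) = 1 := by
        intro g
        have hm1 : ((-1 : ℤ) : ZMod 2) = 1 := by decide
        rw [Int.cast_pow, hm1, one_pow]
      rw [Finset.sum_congr rfl (fun g _ => h1 g), Finset.sum_const, Finset.card_univ,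
        nsmul_eq_mul, mul_one]
      exact (ZMod.natCast_eq_zero_iff _ 2).mpr hcard
    have hB : ((σ : ZMod 2)) = 1 := by
      have hm1 : ((-1 : ℤ) : ZMod 2) = 1 := by decide
      rw [hσval, Int.cast_pow, hm1, one_pow]
    exact one_ne_zero (hB.symm.trans hA)

end Forward


/-- For a finite field `F` of characteristic 2 and a subgroup `H ≤ Fˣ`, the
semidirect product `F ⋊ H` (with `H` acting by multiplication) has a Lee
weight iff `H` is trivial. -/
theorem semidirect_hasLeeWeight_iff_char_two (F : Type*) [Field F] [Finite F]
    [CharP F 2] (H : Subgroup Fˣ) :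
    HasLeeWeight (Multiplicative F ⋊[(affHom F).comp H.subtype] H) ↔
      H = ⊥ := by
  constructor
  · exact forward F H
  · rintro rfl
    exact hasLeeWeight_bot F (hasLeeWeight_multiplicative F)
end
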